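/- Under the same assumptions, the infimum in φ(v) = μ · inf_w ( (v−w)²/2 + ς(w) ) is attained uniquely at ŵ(v) = v − φ'(v)/μ. -/

import Mathlib

/-!
Put `f := φ / μ` and `g t := t ^ 2 / 2 - f t`. Expanding the square,
`(v - w) ^ 2 / 2 - (w - t) ^ 2 / 2 + f t = f v - (g t - g v - w * (t - v))`, so taking the
supremum over `t` shows that `(v - w) ^ 2 / 2 + ς w ≥ f v`, with equality exactly when `w` is a
subgradient of `g` at `v`. The convex differentiable function `g` has the single subgradient
`g' v = v - φ' v / μ` at `v`.
-/

lemma ConvexOn.add_mul_sub_le_of_hasDerivAt {g : ℝ → ℝ} (hg : ConvexOn ℝ Set.univ g)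
    {x d : ℝ} (hd : HasDerivAt g d x) (y : ℝ) : g x + d * (y - x) ≤ g y := by
  rcases lt_trichotomy x y with hxy | rfl | hyx
  · have := hg.le_slope_of_hasDerivAt (Set.mem_univ x) (Set.mem_univ y) hxy hd
    rw [slope_def_field, le_div_iff₀ (sub_pos.2 hxy)] at this
    linarith
  · simp
  · have := hg.slope_le_of_hasDerivAt (Set.mem_univ y) (Set.mem_univ x) hyx hd
    rw [slope_def_field, div_le_iff₀ (sub_pos.2 hyx)] at this
    linarith

lemma HasDerivAt.eq_of_forall_add_mul_sub_le {g : ℝ → ℝ} {x d s : ℝ} (hd : HasDerivAt g d x)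
    (hs : ∀ y, g x + s * (y - x) ≤ g y) : s = d := by
  have hmin : IsLocalMin (fun y => g y - y * s) x :=
    Filter.Eventually.of_forall fun y => by linarith [hs y]
  have hd' : HasDerivAt (fun y => g y - y * s) (d - s) x := hd.sub (hasDerivAt_mul_const s)
  linarith [hmin.hasDerivAt_eq_zero hd']

section ProximalObjective

variable {f ς : ℝ → ℝ}

lemma le_sq_div_two_add_of_isLUB
    (hς : ∀ w, IsLUB {z | ∃ t, z = -(w - t) ^ 2 / 2 + f t} (ς w)) (v w : ℝ) :
    f v ≤ (v - w) ^ 2 / 2 + ς w := by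
  linarith [(hς w).1 ⟨v, rfl⟩, show (w - v) ^ 2 = (v - w) ^ 2 by ring]

lemma sq_div_two_add_le_iff_of_isLUB
    (hς : ∀ w, IsLUB {z | ∃ t, z = -(w - t) ^ 2 / 2 + f t} (ς w)) (v w : ℝ) :
    (v - w) ^ 2 / 2 + ς w ≤ f v ↔ ∀ t, v ^ 2 / 2 - f v + w * (t - v) ≤ t ^ 2 / 2 - f t := by
  have hς_le : ς w ≤ f v - (v - w) ^ 2 / 2 ↔
      ∀ t, -(w - t) ^ 2 / 2 + f t ≤ f v - (v - w) ^ 2 / 2 :=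
    ⟨fun h t => ((hς w).1 ⟨t, rfl⟩).trans h,
      fun h => (hς w).2 fun _ ⟨t, hz⟩ => hz ▸ h t⟩
  rw [← le_sub_iff_add_le', hς_le]
  refine forall_congr' fun t => ?_
  have : -(w - t) ^ 2 / 2 + f t - (f v - (v - w) ^ 2 / 2)
      = v ^ 2 / 2 - f v + w * (t - v) - (t ^ 2 / 2 - f t) := by ring
  constructor <;> intro h <;> linarith

end ProximalObjective

theorem stmt_1_general (φ : ℝ → ℝ) (μ : ℝ) (hφ : Differentiable ℝ φ)
    (hconv : ConvexOn ℝ Set.univ (fun v : ℝ => v ^ 2 / 2 - φ v / μ))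
    (ς : ℝ → ℝ)
    (hς : ∀ w : ℝ, IsLUB {z : ℝ | ∃ t : ℝ, z = -(w - t) ^ 2 / 2 + φ t / μ} (ς w))
    (v : ℝ) :
    (∀ w : ℝ, (v - (v - deriv φ v / μ)) ^ 2 / 2 + ς (v - deriv φ v / μ)
        ≤ (v - w) ^ 2 / 2 + ς w) ∧
    (∀ w : ℝ, (∀ w' : ℝ, (v - w) ^ 2 / 2 + ς w ≤ (v - w') ^ 2 / 2 + ς w') →
        w = v - deriv φ v / μ) := by
  have hg : HasDerivAt (fun t => t ^ 2 / 2 - φ t / μ) (v - deriv φ v / μ) v := by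
    refine (((hasDerivAt_pow 2 v).div_const 2).sub
      ((hφ v).hasDerivAt.div_const μ)).congr_deriv ?_
    norm_num
  have hŵ := (sq_div_two_add_le_iff_of_isLUB hς v _).2 (hconv.add_mul_sub_le_of_hasDerivAt hg)
  refine ⟨fun w => hŵ.trans (le_sq_div_two_add_of_isLUB hς v w), fun w hw => ?_⟩
  exact hg.eq_of_forall_add_mul_sub_le
    ((sq_div_two_add_le_iff_of_isLUB hς v w).1 ((hw _).trans hŵ))

theorem stmt_1 (φ : ℝ → ℝ) (μ : ℝ) (hμ : 0 < μ) (hφ : Differentiable ℝ φ)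
    (hconv : ConvexOn ℝ Set.univ (fun v : ℝ => v ^ 2 / 2 - φ v / μ))
    (ς : ℝ → ℝ)
    (hς : ∀ w : ℝ, IsLUB {z : ℝ | ∃ t : ℝ, z = -(w - t) ^ 2 / 2 + φ t / μ} (ς w))
    (v : ℝ) :
    (∀ w : ℝ, (v - (v - deriv φ v / μ)) ^ 2 / 2 + ς (v - deriv φ v / μ)
        ≤ (v - w) ^ 2 / 2 + ς w) ∧
    (∀ w : ℝ, (∀ w' : ℝ, (v - w) ^ 2 / 2 + ς w ≤ (v - w') ^ 2 / 2 + ς w') →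
        w = v - deriv φ v / μ) :=
  stmt_1_general φ μ hφ hconv ς hς v
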